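/- Let $p \geq 2$ and $\alpha_j^p = \frac{(-1)^{j+1} p (p+j)!}{(p-j-1)!(2j+2)!}$ for $1 \leq j \leq p-1$. Then for all $\kappa \in [0, 4p^2]$, we have $\left|\frac{2}{p^2} \sum_{j=1}^{p-1} \alpha_j^p \left(\frac{\kappa}{p^2}\right)^j\right| \leq \frac{\kappa}{12}$. -/

import Mathlib

/-- Coefficients of the local time-stepping scheme in closed form. -/
noncomputable def alphaLTS (p j : ℕ) : ℝ :=
  (-1 : ℝ) ^ (j + 1) * (p : ℝ) * (Nat.factorial (p + j)) /
    ((Nat.factorial (p - j - 1)) * (Nat.factorial (2 * j + 2)))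

/-!
`α_j^p` is the coefficient of `x^(j+1)` in `T_p(1 - x/2)`, so that
`x ∑ α_j^p x^j = T_p(1 - x/2) - 1 + p²x/2` is the second-order Taylor remainder of `T_p` at `1`.
Since `|T_p''| ≤ T_p''(1) = p²(p²-1)/3` on `[-1, 1]` and `1 - x/2 ∈ [-1, 1]` for `x ∈ [0, 4]`,
this remainder is at most `p⁴x²/24`, which for `x = κ/p²` is the claim.
-/

open Polynomial Polynomial.Chebyshev Finset Nat

theorem Nat.prod_range_odd_mul_two_pow_mul_factorial (k : ℕ) :
    (∏ l ∈ range k, (2 * l + 1)) * (2 ^ k * k !) = (2 * k)! := by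
  induction k with
  | zero => simp
  | succ k ih =>
    rw [prod_range_succ, show 2 * (k + 1) = 2 * k + 1 + 1 by ring, factorial_succ,
      factorial_succ, factorial_succ, ← ih]
    ring

theorem Nat.prod_range_sq_sub_sq {k p : ℕ} (hk : k ≤ p) :
    ∏ l ∈ range k, ((p : ℤ) ^ 2 - l ^ 2) = p.descFactorial k * p.ascFactorial k := by
  rw [descFactorial_eq_prod_range, ascFactorial_eq_prod_range, ← Nat.cast_mul, ← prod_mul_distrib]
  push_cast
  refine prod_congr rfl fun l hl => ?_
  rw [Nat.cast_sub (by grind)]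
  ring

theorem Polynomial.Chebyshev.iterate_derivative_T_eval_one_div_factorial {k p : ℕ} (hk : k ≤ p)
    (hp : 0 < p) :
    (derivative^[k] (T ℝ p)).eval 1 / k ! = 2 ^ k * p * (p + k - 1)! / ((p - k)! * (2 * k)!) := by
  obtain ⟨n, rfl⟩ : ∃ n, p = n + 1 := ⟨p - 1, by omega⟩
  have key : (n + 1).descFactorial k * (n + 1).ascFactorial k * ((n + 1 - k)! * (2 * k)!) =
      2 ^ k * (n + 1) * (n + k)! * ((∏ l ∈ range k, (2 * l + 1)) * k !) := by
    refine Nat.eq_of_mul_eq_mul_right (factorial_pos n) ?_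
    calc _ = ((n + 1 - k)! * (n + 1).descFactorial k) * (n ! * (n + 1).ascFactorial k) *
          (2 * k)! := by ring
      _ = (n + 1)! * (n + k)! * (2 * k)! := by
          rw [factorial_mul_descFactorial hk, factorial_mul_ascFactorial]
      _ = ((n + 1) * n !) * (n + k)! * ((∏ l ∈ range k, (2 * l + 1)) * (2 ^ k * k !)) := by
          rw [prod_range_odd_mul_two_pow_mul_factorial, factorial_succ]
      _ = _ := by ring
  rw [iterate_derivative_T_eval_one_eq_div, prod_range_sq_sub_sq hk, div_div,
    div_eq_div_iff (by positivity) (by positivity), show n + 1 + k - 1 = n + k by omega]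
  exact_mod_cast key

theorem Polynomial.Chebyshev.abs_eval_iterate_derivative_two_T_real_le (n : ℤ) {t : ℝ}
    (ht : |t| ≤ 1) : |(derivative^[2] (T ℝ n)).eval t| ≤ n ^ 2 * (n ^ 2 - 1) / 3 := by
  refine (abs_iterate_derivative_T_real_le n 2 ht).trans_eq ?_
  rw [iterate_derivative_T_eval_one_eq_div]
  simp [prod_range_succ]

theorem Polynomial.eval_add_eq_sum_range_iterate_derivative {K : Type*} [Field K] [CharZero K]
    {P : K[X]} {n : ℕ} (hn : P.natDegree < n) (a h : K) :
    P.eval (a + h) = ∑ k ∈ range n, (derivative^[k] P).eval a / k ! * h ^ k := by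
  rw [add_comm, ← taylor_eval, eval_eq_sum_range' (by rwa [natDegree_taylor])]
  refine sum_congr rfl fun k _ => ?_
  rw [taylor_coeff, ← factorial_smul_hasseDeriv, LinearMap.smul_apply, eval_smul, nsmul_eq_mul,
    mul_div_cancel_left₀ _ (Nat.cast_ne_zero.2 (factorial_ne_zero k))]

theorem Polynomial.taylor_mean_remainder_lagrange_two (P : ℝ[X]) {a b : ℝ} (hab : a ≠ b) :
    ∃ ξ ∈ Set.uIoo a b, P.eval b = P.eval a + P.derivative.eval a * (b - a) +
      (derivative^[2] P).eval ξ * (b - a) ^ 2 / 2 := by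
  have hP : ContDiff ℝ 2 fun t => P.eval t := by simpa using P.contDiff_aeval (𝕜 := ℝ) 2
  obtain ⟨ξ, hξ, h⟩ := taylor_mean_remainder_lagrange_iteratedDeriv (n := 1) hab hP.contDiffOn
  refine ⟨ξ, hξ, ?_⟩
  have hderiv (Q : ℝ[X]) : deriv (fun t => Q.eval t) = fun t => Q.derivative.eval t := by
    ext; exact Q.deriv
  rw [taylorWithinEval_succ, taylor_within_zero_eval, iteratedDerivWithin_one,
    P.derivWithin ((uniqueDiffOn_uIcc hab) a Set.left_mem_uIcc), iteratedDeriv_succ,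
    iteratedDeriv_one, hderiv, hderiv] at h
  simp only [CharP.cast_eq_zero, zero_add, factorial_zero, cast_one, mul_one, inv_one, pow_one,
    one_mul, smul_eq_mul, reduceAdd, factorial_two, cast_ofNat] at h
  rw [Function.iterate_succ_apply, Function.iterate_one]
  linear_combination h

theorem Polynomial.abs_taylor_remainder_two_le (P : ℝ[X]) {a b M : ℝ}
    (hM : ∀ t ∈ Set.uIcc a b, |(derivative^[2] P).eval t| ≤ M) :
    |P.eval b - P.eval a - P.derivative.eval a * (b - a)| ≤ M * (b - a) ^ 2 / 2 := by
  rcases eq_or_ne a b with rfl | hab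
  · simp
  obtain ⟨ξ, hξ, h⟩ := P.taylor_mean_remainder_lagrange_two hab
  have hrem : P.eval b - P.eval a - P.derivative.eval a * (b - a) =
      (derivative^[2] P).eval ξ * (b - a) ^ 2 / 2 := by
    rw [h]; ring
  rw [hrem, abs_div, abs_mul, abs_two, abs_sq]
  gcongr
  exact hM ξ (Set.Ioo_subset_Icc_self hξ)

theorem Polynomial.Chebyshev.abs_eval_T_real_sub_taylor_one_le (n : ℤ) {t : ℝ} (ht : |t| ≤ 1) :
    |(T ℝ n).eval t - 1 - n ^ 2 * (t - 1)| ≤ n ^ 2 * (n ^ 2 - 1) / 6 * (t - 1) ^ 2 := by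
  have hsub : Set.uIcc 1 t ⊆ Set.Icc (-1) 1 :=
    Set.uIcc_subset_Icc ⟨by norm_num, le_rfl⟩ (abs_le.1 ht)
  have h := (T ℝ n).abs_taylor_remainder_two_le (a := 1) (b := t)
    fun s hs => abs_eval_iterate_derivative_two_T_real_le n (abs_le.2 (hsub hs))
  rw [T_eval_one, derivative_T_eval_one] at h
  linarith

theorem alphaLTS_eq_iterate_derivative_T {p j : ℕ} (hj : j < p) :
    alphaLTS p j = (derivative^[j + 1] (T ℝ p)).eval 1 / (j + 1)! * (-1 / 2) ^ (j + 1) := by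
  rw [iterate_derivative_T_eval_one_div_factorial hj (by omega), alphaLTS,
    show p + (j + 1) - 1 = p + j by omega, show 2 * (j + 1) = 2 * j + 2 by ring, div_pow,
    Nat.sub_sub]
  field_simp

theorem mul_sum_alphaLTS_mul_pow_eq {p : ℕ} (hp : 0 < p) (x : ℝ) :
    x * ∑ j ∈ Icc 1 (p - 1), alphaLTS p j * x ^ j =
      (T ℝ p).eval (1 - x / 2) - 1 + p ^ 2 * x / 2 := by
  obtain ⟨q, rfl⟩ : ∃ q, p = q + 1 := ⟨p - 1, by omega⟩
  have hdeg : (T ℝ (q + 1 : ℕ)).natDegree < q + 2 := by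
    rw [natDegree_T]; omega
  have hterm (i : ℕ) (hi : i ∈ range q) : x * (alphaLTS (q + 1) (1 + i) * x ^ (1 + i)) =
      (derivative^[i + 1 + 1] (T ℝ (q + 1 : ℕ))).eval 1 / (i + 1 + 1)! *
        (-(x / 2)) ^ (i + 1 + 1) := by
    rw [add_comm 1 i, alphaLTS_eq_iterate_derivative_T (by grind)]
    ring
  rw [sub_eq_add_neg 1, eval_add_eq_sum_range_iterate_derivative hdeg, sum_range_succ',
    sum_range_succ', add_tsub_cancel_right, ← Ico_add_one_right_eq_Icc, sum_Ico_eq_sum_range,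
    add_tsub_cancel_right, mul_sum, sum_congr rfl hterm]
  simp only [Function.iterate_zero_apply, Function.iterate_one, zero_add, T_eval_one,
    derivative_T_eval_one, factorial_zero, factorial_one]
  push_cast
  ring

theorem abs_sum_alphaLTS_mul_pow_le {p : ℕ} (hp : 0 < p) {x : ℝ} (hx₀ : 0 ≤ x) (hx₄ : x ≤ 4) :
    |∑ j ∈ Icc 1 (p - 1), alphaLTS p j * x ^ j| ≤ p ^ 4 * x / 24 := by
  rcases hx₀.eq_or_lt with rfl | hx
  · rw [sum_eq_zero fun j hj => by rw [zero_pow (by grind), mul_zero]]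
    simp
  have hT := abs_eval_T_real_sub_taylor_one_le p (t := 1 - x / 2)
    (abs_le.2 ⟨by linarith, by linarith⟩)
  push_cast at hT
  refine le_of_mul_le_mul_left ?_ hx
  calc x * |∑ j ∈ Icc 1 (p - 1), alphaLTS p j * x ^ j|
      = |(T ℝ p).eval (1 - x / 2) - 1 - p ^ 2 * (1 - x / 2 - 1)| := by
        rw [← abs_of_pos hx, ← abs_mul, abs_of_pos hx, mul_sum_alphaLTS_mul_pow_eq hp]
        ring_nf
    _ ≤ p ^ 2 * (p ^ 2 - 1) / 6 * (1 - x / 2 - 1) ^ 2 := hT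
    _ ≤ x * (p ^ 4 * x / 24) := by nlinarith

theorem alphaLTS_sum_bound (p : ℕ) (hp : 2 ≤ p) (κ : ℝ)
    (hκ : κ ∈ Set.Icc (0 : ℝ) (4 * (p : ℝ) ^ 2)) :
    |2 / (p : ℝ) ^ 2 * ∑ j ∈ Finset.Icc 1 (p - 1), alphaLTS p j * (κ / (p : ℝ) ^ 2) ^ j| ≤
      κ / 12 := by
  obtain ⟨hκ₀, hκ₄⟩ := hκ
  have hp₀ : (0 : ℝ) < p ^ 2 := by positivity
  have hS := abs_sum_alphaLTS_mul_pow_le (p := p) (by omega) (x := κ / p ^ 2) (by positivity)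
    (by rw [div_le_iff₀ hp₀]; linarith)
  calc _ = 2 / (p : ℝ) ^ 2 * |∑ j ∈ Icc 1 (p - 1), alphaLTS p j * (κ / p ^ 2) ^ j| := by
        rw [abs_mul, abs_of_pos (by positivity)]
    _ ≤ 2 / p ^ 2 * (p ^ 4 * (κ / p ^ 2) / 24) := by gcongr
    _ = κ / 12 := by field_simp; ring
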